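/- arXiv:2012.00379 — 3 statements merged into one kernel-verified Lean document; each statement's English description precedes it below -/
import Mathlib

section
/- Let α, β be real numbers and let i < j be integers in [0,5] with j − i = 3. Then α·x^i + β·x^j ∈ ℤ[x] if and only if there exist integers α₁, α₂, β₁, β₂ such that α = (α₁ + α₂√3)/2, β = (β₁ + β₂√3)/2, α₁ − 3β₂ is even, and α₂ − β₁ is even. -/
/-- `x = exp(πi/6)`, a primitive 12th root of unity. -/
noncomputable def x : ℂ := Complex.exp (Real.pi * Complex.I / 6)

/-- `ℤ[x]`: the additive subgroup of `ℂ` generated by `x^k`, `0 ≤ k ≤ 5`. -/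
def Zx : Set ℂ := {z | ∃ n : Fin 6 → ℤ, z = ∑ k : Fin 6, (n k : ℂ) * x ^ (k : ℕ)}

lemma hxval : x = ((Real.sqrt 3 : ℝ) : ℂ)/2 + Complex.I/2 := by
  have h : (Real.pi * Complex.I / 6) = ((Real.pi/6 : ℝ) : ℂ) * Complex.I := by push_cast; ring
  rw [x, h, Complex.exp_mul_I]
  rw [← Complex.ofReal_cos, ← Complex.ofReal_sin, Real.cos_pi_div_six, Real.sin_pi_div_six]
  push_cast; ring

lemma h3C : ((Real.sqrt 3 : ℝ) : ℂ)^2 = 3 := by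
  have : (Real.sqrt 3)^2 = (3:ℝ) := Real.sq_sqrt (by norm_num)
  exact_mod_cast this

lemma x2 : x^2 = 1/2 + ((Real.sqrt 3 : ℝ) : ℂ)/2 * Complex.I := by
  rw [hxval]; linear_combination (1/4)*h3C + (1/4)*Complex.I_sq

lemma x3 : x^3 = Complex.I := by
  rw [hxval]
  linear_combination ((((Real.sqrt 3:ℝ):ℂ)+3*Complex.I)/8)*h3C + ((3*((Real.sqrt 3:ℝ):ℂ)+Complex.I)/8)*Complex.I_sq

lemma x6 : x^6 = -1 := by
  rw [show (6:ℕ) = 3*2 from rfl, pow_mul, x3, Complex.I_sq]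

lemma x4 : x^4 = -(1/2) + ((Real.sqrt 3 : ℝ) : ℂ)/2 * Complex.I := by
  rw [show (4:ℕ) = 2*2 from rfl, pow_mul, x2]
  linear_combination (Complex.I^2/4) * h3C + (3/4) * Complex.I_sq

lemma x5 : x^5 = -(((Real.sqrt 3 : ℝ) : ℂ)/2) + Complex.I/2 := by
  rw [show (5:ℕ) = 2+3 from rfl, pow_add, x2, x3]
  linear_combination (((Real.sqrt 3:ℝ):ℂ)/2)*Complex.I_sq

lemma zx_mul (z : ℂ) : z ∈ Zx ↔ x * z ∈ Zx := by
  have hx0 : x ≠ 0 := by rw [x]; exact Complex.exp_ne_zero _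
  constructor
  · rintro ⟨n, rfl⟩
    exact ⟨![-(n 5), n 0, n 1, n 2, n 3, n 4], by
      simp [Fin.sum_univ_six, show ((3:Fin 6):ℕ)=3 from rfl, show ((4:Fin 6):ℕ)=4 from rfl,
        show ((5:Fin 6):ℕ)=5 from rfl, Matrix.cons_val_succ,
        show (![-(n 5), n 0, n 1, n 2, n 3, n 4] : Fin 6 → ℤ) 5 = n 4 from rfl]
      linear_combination ((n 5 : ℂ)) * x6⟩
  · rintro ⟨n, hn⟩
    refine ⟨![n 1, n 2, n 3, n 4, n 5, -(n 0)], mul_left_cancel₀ hx0 ?_⟩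
    rw [hn]
    simp [Fin.sum_univ_six, show ((3:Fin 6):ℕ)=3 from rfl, show ((4:Fin 6):ℕ)=4 from rfl,
      show ((5:Fin 6):ℕ)=5 from rfl, Matrix.cons_val_succ,
      show (![n 1, n 2, n 3, n 4, n 5, -(n 0)] : Fin 6 → ℤ) 5 = -(n 0) from rfl]
    linear_combination ((n 0 : ℂ)) * x6

lemma pow_mul_mem (k : ℕ) : ∀ z : ℂ, (x ^ k * z ∈ Zx ↔ z ∈ Zx) := by
  induction k with
  | zero => intro z; simp
  | succ m ih =>
    intro z
    rw [pow_succ, mul_assoc, ih (x*z)]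
    exact (zx_mul z).symm

lemma mem_iff (α β : ℝ) : ((α:ℂ) + (β:ℂ) * Complex.I ∈ Zx) ↔
    ∃ α₁ α₂ β₁ β₂ : ℤ,
        α = (α₁ + α₂ * Real.sqrt 3) / 2 ∧
        β = (β₁ + β₂ * Real.sqrt 3) / 2 ∧
        (2 : ℤ) ∣ (α₁ - 3 * β₂) ∧ (2 : ℤ) ∣ (α₂ - β₁) := by
  constructor
  · rintro ⟨n, hn⟩
    rw [Fin.sum_univ_six] at hn
    simp only [show ((0:Fin 6):ℕ)=0 from rfl, show ((1:Fin 6):ℕ)=1 from rfl,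
      show ((2:Fin 6):ℕ)=2 from rfl, show ((3:Fin 6):ℕ)=3 from rfl,
      show ((4:Fin 6):ℕ)=4 from rfl, show ((5:Fin 6):ℕ)=5 from rfl,
      pow_zero, pow_one, x2, x3, x4, x5] at hn
    rw [hxval] at hn
    have h1 := congrArg Complex.re hn
    have h2 := congrArg Complex.im hn
    simp at h1 h2
    refine ⟨2*(n 0) + n 2 - n 4, n 1 - n 5, n 1 + 2*(n 3) + n 5, n 2 + n 4, ?_, ?_, ?_, ?_⟩
    · push_cast; linear_combination h1
    · push_cast; linear_combination h2
    · exact ⟨n 0 - n 2 - 2*(n 4), by ring⟩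
    · exact ⟨-(n 3) - n 5, by ring⟩
  · rintro ⟨α₁, α₂, β₁, β₂, rfl, rfl, ⟨c, hc⟩, ⟨d, hd⟩⟩
    refine ⟨![c + β₂, α₂, β₂, -d, 0, 0], ?_⟩
    rw [Fin.sum_univ_six]
    simp only [Matrix.cons_val_zero, Matrix.cons_val_one, Matrix.head_cons,
      Matrix.cons_val_two, Matrix.tail_cons, Matrix.cons_val_three, Matrix.cons_val_four,
      show (![(c+β₂ : ℤ), α₂, β₂, -d, 0, 0] : Fin 6 → ℤ) 5 = 0 from rfl,
      show ((0:Fin 6):ℕ)=0 from rfl, show ((1:Fin 6):ℕ)=1 from rfl,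
      show ((2:Fin 6):ℕ)=2 from rfl, show ((3:Fin 6):ℕ)=3 from rfl,
      show ((4:Fin 6):ℕ)=4 from rfl, show ((5:Fin 6):ℕ)=5 from rfl,
      pow_zero, pow_one, x2, x3, x4, x5]
    have hc' : (α₁:ℂ) = 2*c + 3*β₂ := by
      have h : α₁ = 2*c + 3*β₂ := by omega
      exact_mod_cast h
    have hd' : (α₂:ℂ) = β₁ + 2*d := by
      have h : α₂ = β₁ + 2*d := by omega
      exact_mod_cast h
    rw [hxval]
    push_cast
    rw [hc', hd']
    ring

theorem stmt3 (α β : ℝ) (i j : ℕ) (hj : j ≤ 5) (hij : i < j) (hd : j - i = 3) :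
    (α : ℂ) * x ^ i + (β : ℂ) * x ^ j ∈ Zx ↔
      ∃ α₁ α₂ β₁ β₂ : ℤ,
        α = (α₁ + α₂ * Real.sqrt 3) / 2 ∧
        β = (β₁ + β₂ * Real.sqrt 3) / 2 ∧
        (2 : ℤ) ∣ (α₁ - 3 * β₂) ∧ (2 : ℤ) ∣ (α₂ - β₁) := by
  have hji : j = i + 3 := by omega
  subst hji
  have key : (α : ℂ) * x ^ i + (β : ℂ) * x ^ (i + 3) =
      x ^ i * ((α:ℂ) + (β:ℂ) * Complex.I) := by
    rw [pow_add, x3]; ring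
  rw [key, pow_mul_mem]
  exact mem_iff α β
end

section
/- Let α, β be real numbers and let i < j be integers in [0,5] with j − i = 2. Then α·x^i + β·x^j ∈ ℤ[x] if and only if there exist integers α₁, α₂, β₁, β₂ such that α = (α₁ + α₂√3)/√3, β = (β₁ + β₂√3)/√3, and α₁ − β₁ is divisible by 3. -/
/-!
Multiplication by `x` preserves `ℤ[x]`, and `x` is invertible there since `x ^ 12 = 1`, so it
suffices to treat `i = 0`, `j = 2`. Writing `x = (√3 + i)/2`, the number `α + β x²` has real part
`α + β/2` and imaginary part `β√3/2`; comparing with the real and imaginary parts of a general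
`∑ mₖ xᵏ` produces the integers `α₁, α₂, β₁, β₂`, and conversely these give explicit coefficients.
-/

open Complex

lemma ofReal_sqrt_three_sq : ((√3 : ℝ) : ℂ) ^ 2 = 3 := by
  exact_mod_cast Real.sq_sqrt (show (0 : ℝ) ≤ 3 by norm_num)

lemma x_eq : x = ((√3 / 2 : ℝ) : ℂ) + I / 2 := by
  rw [x, show (Real.pi : ℂ) * I / 6 = ((Real.pi / 6 : ℝ) : ℂ) * I by push_cast; ring,
    exp_mul_I, ← ofReal_cos, ← ofReal_sin, Real.cos_pi_div_six, Real.sin_pi_div_six]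
  push_cast
  ring

lemma x_sq : x ^ 2 = 1 / 2 + ((√3 / 2 : ℝ) : ℂ) * I := by
  rw [x_eq]
  push_cast
  linear_combination (1 / 4 : ℂ) * ofReal_sqrt_three_sq + (1 / 4 : ℂ) * I_sq

lemma x_pow_three : x ^ 3 = I := by
  rw [pow_succ, x_sq, x_eq]
  push_cast
  linear_combination (I / 4) * ofReal_sqrt_three_sq + ((√3 : ℂ) / 4) * I_sq

lemma x_pow_six : x ^ 6 = -1 := by
  rw [x, ← exp_nat_mul, show ((6 : ℕ) : ℂ) * (Real.pi * I / 6) = Real.pi * I by push_cast; ring,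
    exp_pi_mul_I]

lemma x_pow_twelve : x ^ 12 = 1 := by
  rw [show 12 = 6 * 2 from rfl, pow_mul, x_pow_six]
  norm_num

lemma sum_mul_x_pow_eq (m : Fin 6 → ℤ) : ∑ k : Fin 6, (m k : ℂ) * x ^ (k : ℕ) =
    ((m 0 + (m 2 - m 4) / 2 + √3 / 2 * (m 1 - m 5) : ℝ) : ℂ) +
      ((m 3 + (m 1 + m 5) / 2 + √3 / 2 * (m 2 + m 4) : ℝ) : ℂ) * I := by
  simp only [Fin.sum_univ_six, Fin.isValue, Fin.val_zero, Fin.val_one, Fin.val_two]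
  rw [show ((3 : Fin 6) : ℕ) = 3 from rfl, show ((4 : Fin 6) : ℕ) = 3 + 1 from rfl,
    show ((5 : Fin 6) : ℕ) = 3 + 2 from rfl, pow_add, pow_add, pow_zero, pow_one, x_pow_three,
    x_sq, x_eq]
  push_cast
  linear_combination ((m 4 : ℂ) / 2 + m 5 * (√3 : ℂ) / 2) * I_sq

lemma x_mul_mem_Zx {z : ℂ} (hz : z ∈ Zx) : x * z ∈ Zx := by
  obtain ⟨n, rfl⟩ := hz
  refine ⟨![-n 5, n 0, n 1, n 2, n 3, n 4], ?_⟩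
  simp only [Fin.sum_univ_six, Fin.isValue, pow_zero, mul_one, pow_one, Fin.coe_ofNat_eq_mod,
    Nat.reduceMod, Nat.mod_succ, Matrix.cons_val_zero, Int.cast_neg, Matrix.cons_val_one,
    Matrix.cons_val]
  linear_combination (n 5 : ℂ) * x_pow_six

lemma x_pow_mul_mem_Zx {z : ℂ} (hz : z ∈ Zx) (n : ℕ) : x ^ n * z ∈ Zx := by
  induction n with
  | zero => simpa using hz
  | succ n ih => simpa [pow_succ', mul_assoc] using x_mul_mem_Zx ih

lemma x_pow_mul_mem_Zx_iff (n : ℕ) (z : ℂ) : x ^ n * z ∈ Zx ↔ z ∈ Zx := by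
  refine ⟨fun h => ?_, fun h => x_pow_mul_mem_Zx h n⟩
  have x_pow_inv : x ^ (11 * n) * x ^ n = 1 := by
    rw [← pow_add, show 11 * n + n = 12 * n by ring, pow_mul, x_pow_twelve, one_pow]
  simpa [← mul_assoc, x_pow_inv] using x_pow_mul_mem_Zx h (11 * n)

lemma ofReal_add_ofReal_mul_x_sq_mem_Zx_iff (α β : ℝ) :
    (α : ℂ) + (β : ℂ) * x ^ 2 ∈ Zx ↔
      ∃ α₁ α₂ β₁ β₂ : ℤ,
        α = (α₁ + α₂ * √3) / √3 ∧ β = (β₁ + β₂ * √3) / √3 ∧ (3 : ℤ) ∣ (α₁ - β₁) := by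
  have h3 : √3 ^ 2 = 3 := Real.sq_sqrt (by norm_num)
  have h3_ne : √3 ≠ 0 := by positivity
  have hz : (α : ℂ) + β * x ^ 2 = ((α + β / 2 : ℝ) : ℂ) + ((√3 / 2 * β : ℝ) : ℂ) * I := by
    rw [x_sq]
    push_cast
    ring
  simp only [Zx, Set.mem_ofPred_eq, hz, sum_mul_x_pow_eq, Complex.ext_iff, add_re, add_im,
    ofReal_re, ofReal_im, mul_re, mul_im, I_re, I_im, mul_zero, mul_one, sub_zero, add_zero,
    zero_add]
  constructor
  · rintro ⟨m, hre, him⟩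
    refine ⟨m 1 - m 3 - 2 * m 5, m 0 - m 4, m 1 + m 5 + 2 * m 3, m 2 + m 4, ?_, ?_,
      ⟨-(m 3 + m 5), by ring⟩⟩
    all_goals rw [eq_div_iff h3_ne]; push_cast
    · linear_combination √3 * hre - him + ((m 1 : ℝ) / 2 - (m 5 : ℝ) / 2) * h3
    · linear_combination 2 * him
  · rintro ⟨α₁, α₂, β₁, β₂, hα, hβ, c, hc⟩
    obtain rfl : β₁ = α₁ - 3 * c := by omega
    refine ⟨![α₂, α₁ - c, β₂, -c, 0, 0], ?_⟩
    simp only [Fin.isValue, Matrix.cons_val_zero, Matrix.cons_val, Int.cast_zero, sub_zero,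
      Matrix.cons_val_one, Int.cast_sub, Int.cast_neg, add_zero]
    rw [hα, hβ]
    push_cast
    field_simp
    exact ⟨by linear_combination ((c : ℝ) - α₁) * h3, by ring⟩

theorem stmt4_general (α β : ℝ) (i j : ℕ) (hd : j - i = 2) :
    (α : ℂ) * x ^ i + (β : ℂ) * x ^ j ∈ Zx ↔
      ∃ α₁ α₂ β₁ β₂ : ℤ,
        α = (α₁ + α₂ * Real.sqrt 3) / Real.sqrt 3 ∧
        β = (β₁ + β₂ * Real.sqrt 3) / Real.sqrt 3 ∧
        (3 : ℤ) ∣ (α₁ - β₁) := by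
  obtain rfl : j = i + 2 := by omega
  rw [show (α : ℂ) * x ^ i + β * x ^ (i + 2) = x ^ i * (α + β * x ^ 2) by ring,
    x_pow_mul_mem_Zx_iff, ofReal_add_ofReal_mul_x_sq_mem_Zx_iff]

theorem stmt4 (α β : ℝ) (i j : ℕ) (hj : j ≤ 5) (hij : i < j) (hd : j - i = 2) :
    (α : ℂ) * x ^ i + (β : ℂ) * x ^ j ∈ Zx ↔
      ∃ α₁ α₂ β₁ β₂ : ℤ,
        α = (α₁ + α₂ * Real.sqrt 3) / Real.sqrt 3 ∧
        β = (β₁ + β₂ * Real.sqrt 3) / Real.sqrt 3 ∧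
        (3 : ℤ) ∣ (α₁ - β₁) :=
  stmt4_general α β i j hd
end

section
/- With S = {(γ₁,γ₂) ∈ ℝ² : ¬(γ₁ ∈ (1/(2√3))G and γ₂ ∈ (1/2)G)}, A = {(γ₁,γ₂) ∈ S : 2√3·γ₁ + 2γ₂ ∈ G}, S' = {(γ₁,γ₂) ∈ ℝ² : ¬(γ₁ ∈ (1/2)G and γ₂ ∈ (1/(2√3))G)}, D = {(γ₁,γ₂) ∈ S' : 2√3·γ₂ + 2γ₁ ∈ G}, a pair (γ₁,γ₂) belongs to A ∩ D if and only if: (a) it is not the case that both γ₁ ∈ (1/(2√3))G and γ₂ ∈ (1/(2√3))G; and (b) there exist integers a, b, c, d with 4γ₁ = a + b√3 and 4γ₂ = c + d√3 such that (c) either a, d are even and b, c are odd, or a, d are odd and b, c are even, or a, b, c, d are all odd. -/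
/-- `G = ℤ[√3]` as a subset of `ℝ`. -/
def G : Set ℝ := {r | ∃ a b : ℤ, r = a + b * Real.sqrt 3}

/-- The scaled set `c·G = {c·g : g ∈ G}`. -/
def scaledG (c : ℝ) : Set ℝ := {r | ∃ g ∈ G, r = c * g}

noncomputable def S : Set (ℝ × ℝ) :=
  {p | ¬ (p.1 ∈ scaledG (1 / (2 * Real.sqrt 3)) ∧ p.2 ∈ scaledG (1 / 2))}

noncomputable def A : Set (ℝ × ℝ) := {p | p ∈ S ∧ 2 * Real.sqrt 3 * p.1 + 2 * p.2 ∈ G}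

noncomputable def S' : Set (ℝ × ℝ) :=
  {p | ¬ (p.1 ∈ scaledG (1 / 2) ∧ p.2 ∈ scaledG (1 / (2 * Real.sqrt 3)))}

noncomputable def D : Set (ℝ × ℝ) := {p | p ∈ S' ∧ 2 * Real.sqrt 3 * p.2 + 2 * p.1 ∈ G}

lemma sqrt3_sq : Real.sqrt 3 * Real.sqrt 3 = 3 := Real.mul_self_sqrt (by norm_num)

lemma sqrt3_ne : Real.sqrt 3 ≠ 0 := by
  have : (0:ℝ) < Real.sqrt 3 := Real.sqrt_pos.mpr (by norm_num)
  linarith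

lemma irr3 : Irrational (Real.sqrt 3) := by
  have := (Nat.prime_three).irrational_sqrt
  simpa using this

lemma unique_q (p q r t : ℚ) (h : (p:ℝ) + q * Real.sqrt 3 = r + t * Real.sqrt 3) :
    p = r ∧ q = t := by
  have hqt : q = t := by
    by_contra hne
    apply irr3
    refine ⟨(p - r) / (t - q), ?_⟩
    have ht : (t:ℝ) - (q:ℝ) ≠ 0 := by
      intro h0
      have h1 : (t:ℝ) = q := sub_eq_zero.mp h0
      exact hne (by exact_mod_cast h1.symm)
    push_cast
    rw [div_eq_iff ht]
    linarith
  refine ⟨?_, hqt⟩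
  have : (p:ℝ) = r := by rw [hqt] at h; linarith
  exact_mod_cast this

lemma unique_z (a b c d : ℤ) (h : (a:ℝ) + b * Real.sqrt 3 = c + d * Real.sqrt 3) :
    a = c ∧ b = d := by
  have := unique_q a b c d (by push_cast; exact_mod_cast h)
  exact ⟨by exact_mod_cast this.1, by exact_mod_cast this.2⟩

/-- Characterization of membership in `(1/2)·G` for points on the quarter lattice. -/
lemma half_iff (γ : ℝ) (a b : ℤ) (h : 4 * γ = a + b * Real.sqrt 3) :
    γ ∈ scaledG (1 / 2) ↔ Even a ∧ Even b := by
  constructor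
  · rintro ⟨g, ⟨p, q, rfl⟩, hg⟩
    have key : (a:ℝ) + b * Real.sqrt 3 = ((2*p : ℤ):ℝ) + ((2*q : ℤ):ℝ) * Real.sqrt 3 := by
      push_cast
      linear_combination 4 * hg - h
    obtain ⟨h1, h2⟩ := unique_z _ _ _ _ key
    exact ⟨⟨p, by omega⟩, ⟨q, by omega⟩⟩
  · rintro ⟨⟨p, hp⟩, ⟨q, hq⟩⟩
    refine ⟨(p:ℝ) + q * Real.sqrt 3, ⟨p, q, rfl⟩, ?_⟩
    have h' : 4 * γ = ((p:ℝ) + p) + ((q:ℝ) + q) * Real.sqrt 3 := by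
      rw [h, hp, hq]; push_cast; ring
    linear_combination h' / 4
  
/-- Characterization of membership in `(1/(2√3))·G` for points on the quarter lattice. -/
lemma x_iff (γ : ℝ) (a b : ℤ) (h : 4 * γ = a + b * Real.sqrt 3) :
    γ ∈ scaledG (1 / (2 * Real.sqrt 3)) ↔ Even a ∧ Even b := by
  constructor
  · rintro ⟨g, ⟨p, q, rfl⟩, hg⟩
    have hg' : γ * (2 * Real.sqrt 3) = p + q * Real.sqrt 3 := by
      rw [hg]
      field_simp
    have key : ((3*b : ℤ):ℝ) + (a:ℝ) * Real.sqrt 3 = ((2*p : ℤ):ℝ) + ((2*q : ℤ):ℝ) * Real.sqrt 3 := by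
      push_cast
      linear_combination 2 * hg' - Real.sqrt 3 * h - b * sqrt3_sq
    obtain ⟨h1, h2⟩ := unique_z _ _ _ _ key
    exact ⟨⟨q, by omega⟩, ⟨p - b, by omega⟩⟩
  · rintro ⟨⟨p, hp⟩, ⟨q, hq⟩⟩
    refine ⟨((3*q : ℤ):ℝ) + (p:ℝ) * Real.sqrt 3, ⟨3*q, p, by push_cast; ring⟩, ?_⟩
    have h' : 4 * γ = ((p:ℝ) + p) + ((q:ℝ) + q) * Real.sqrt 3 := by
      rw [h, hp, hq]; push_cast; ring
    rw [div_mul_eq_mul_div, one_mul, eq_div_iff (by positivity : (2 * Real.sqrt 3) ≠ 0)]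
    push_cast
    linear_combination (Real.sqrt 3 / 2) * h' + q * sqrt3_sq

/-- Characterization of `2√3·x + 2·y ∈ G` for points on the quarter lattice. -/
lemma combo_iff (x y : ℝ) (a b c d : ℤ) (hx : 4 * x = a + b * Real.sqrt 3)
    (hy : 4 * y = c + d * Real.sqrt 3) :
    2 * Real.sqrt 3 * x + 2 * y ∈ G ↔ Even (a + d) ∧ Even (b + c) := by
  constructor
  · rintro ⟨p, q, hg⟩
    have key : ((6*b + 2*c : ℤ):ℝ) + ((2*a + 2*d : ℤ):ℝ) * Real.sqrt 3
        = ((4*p : ℤ):ℝ) + ((4*q : ℤ):ℝ) * Real.sqrt 3 := by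
      push_cast
      linear_combination 4 * hg - 2 * Real.sqrt 3 * hx - 2 * hy - 2 * b * sqrt3_sq
    obtain ⟨h1, h2⟩ := unique_z _ _ _ _ key
    exact ⟨⟨q, by omega⟩, ⟨p - b, by omega⟩⟩
  · rintro ⟨⟨q, hq⟩, ⟨m, hm⟩⟩
    refine ⟨m + b, q, ?_⟩
    have hq' : (a:ℝ) + d = q + q := by exact_mod_cast congrArg (Int.cast : ℤ → ℝ) hq
    have hm' : (b:ℝ) + c = m + m := by exact_mod_cast congrArg (Int.cast : ℤ → ℝ) hm
    push_cast
    linear_combination (Real.sqrt 3 / 2) * hx + (1/2) * hy + (b/2) * sqrt3_sq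
      + (Real.sqrt 3 / 2) * hq' + (1/2) * hm'

theorem stmt12 (γ₁ γ₂ : ℝ) :
    (γ₁, γ₂) ∈ A ∩ D ↔
      (¬ (γ₁ ∈ scaledG (1 / (2 * Real.sqrt 3)) ∧ γ₂ ∈ scaledG (1 / (2 * Real.sqrt 3)))) ∧
      ∃ a b c d : ℤ,
        4 * γ₁ = a + b * Real.sqrt 3 ∧
        4 * γ₂ = c + d * Real.sqrt 3 ∧
        ((Even a ∧ Even d ∧ Odd c ∧ Odd b) ∨
         (Odd a ∧ Odd d ∧ Even c ∧ Even b) ∨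
         (Odd a ∧ Odd b ∧ Odd c ∧ Odd d)) := by
  simp only [Set.mem_inter_iff, A, D, S, S', Set.mem_setOf_eq]
  constructor
  · rintro ⟨⟨hS, p, q, hA⟩, hS', r, t, hD⟩
    set a : ℤ := 3*q - r with ha_def
    set b : ℤ := p - t with hb_def
    set c : ℤ := 3*t - p with hc_def
    set d : ℤ := r - q with hd_def
    have ha : 4 * γ₁ = (a:ℝ) + (b:ℝ) * Real.sqrt 3 := by
      rw [ha_def, hb_def]
      push_cast
      linear_combination Real.sqrt 3 * hA - hD + ((q:ℝ) - 2 * γ₁) * sqrt3_sq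
    have hc : 4 * γ₂ = (c:ℝ) + (d:ℝ) * Real.sqrt 3 := by
      rw [hc_def, hd_def]
      push_cast
      linear_combination Real.sqrt 3 * hD - hA + ((t:ℝ) - 2 * γ₂) * sqrt3_sq
    have hnot : ¬ (Even a ∧ Even b ∧ Even c ∧ Even d) := by
      rintro ⟨ea, eb, ec, ed⟩
      exact hS ⟨(x_iff γ₁ a b ha).mpr ⟨ea, eb⟩, (half_iff γ₂ c d hc).mpr ⟨ec, ed⟩⟩
    refine ⟨?_, a, b, c, d, ha, hc, ?_⟩
    · rintro ⟨h1, h2⟩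
      obtain ⟨ea, eb⟩ := (x_iff γ₁ a b ha).mp h1
      obtain ⟨ec, ed⟩ := (x_iff γ₂ c d hc).mp h2
      exact hnot ⟨ea, eb, ec, ed⟩
    · simp only [Int.even_iff, Int.odd_iff] at hnot ⊢
      omega
  · rintro ⟨hne, a, b, c, d, ha, hc, hcase⟩
    have hnotall : ¬ (Even a ∧ Even b ∧ Even c ∧ Even d) := by
      simp only [Int.even_iff, Int.odd_iff] at hcase ⊢
      omega
    have hpar : Even (a + d) ∧ Even (b + c) := by
      simp only [Int.even_iff, Int.odd_iff] at hcase ⊢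
      omega
    have hpar' : Even (c + b) ∧ Even (d + a) := by
      constructor
      · rw [add_comm]; exact hpar.2
      · rw [add_comm]; exact hpar.1
    refine ⟨⟨?_, (combo_iff γ₁ γ₂ a b c d ha hc).mpr hpar⟩,
            ⟨?_, (combo_iff γ₂ γ₁ c d a b hc ha).mpr hpar'⟩⟩
    · rintro ⟨h1, h2⟩
      obtain ⟨ea, eb⟩ := (x_iff γ₁ a b ha).mp h1
      obtain ⟨ec, ed⟩ := (half_iff γ₂ c d hc).mp h2
      exact hnotall ⟨ea, eb, ec, ed⟩
    · rintro ⟨h1, h2⟩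
      obtain ⟨ea, eb⟩ := (half_iff γ₁ a b ha).mp h1
      obtain ⟨ec, ed⟩ := (x_iff γ₂ c d hc).mp h2
      exact hnotall ⟨ea, eb, ec, ed⟩
end
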